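/- arXiv:1503.08928 — 5 statements merged into one kernel-verified Lean document; each statement's English description precedes it below -/
import Mathlib

section
/- Let $P_s, P_d, \sigma^2, g_1, g_2 > 0$ with $g_1 \leq g_2$. Define the upper bound $U = \frac{1}{2}\log\left(1 + g_1 \frac{P_s}{\sigma^2}\right) - \frac{1}{2}\log\left(1 + \frac{g_1 P_s}{g_2 P_d + \sigma^2}\right)$ and the achievable rate $R_s = \frac{1}{2}\log\left(\frac{1}{2} + \frac{P_s}{\sigma^2}\cdot\frac{g_1 g_2}{g_1+g_2}\right) - \frac{1}{2}\log\left(1 + \frac{P_s g_1}{P_d g_2 + \sigma^2}\right)$. Then $U - R_s \leq \frac{1}{2}\log\left(1 + \frac{g_1 + g_2 + 2g_1^2 P_s/\sigma^2}{g_1 + g_2 + 2 g_1 g_2 P_s/\sigma^2}\right) \leq \frac{1}{2}$. -/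
open Real

theorem mf_gap_within_half_bit
    (Ps Pd σ2 g1 g2 : ℝ) (hPs : 0 < Ps) (hPd : 0 < Pd) (hσ : 0 < σ2)
    (hg1 : 0 < g1) (hg2 : 0 < g2) (hle : g1 ≤ g2)
    (U Rs : ℝ)
    (hU : U = (1/2) * Real.logb 2 (1 + g1 * (Ps / σ2))
            - (1/2) * Real.logb 2 (1 + g1 * Ps / (g2 * Pd + σ2)))
    (hRs : Rs = (1/2) * Real.logb 2 (1/2 + Ps / σ2 * (g1 * g2 / (g1 + g2)))
            - (1/2) * Real.logb 2 (1 + Ps * g1 / (Pd * g2 + σ2))) :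
    U - Rs ≤ (1/2) * Real.logb 2
        (1 + (g1 + g2 + 2 * g1^2 * Ps / σ2) / (g1 + g2 + 2 * g1 * g2 * Ps / σ2))
      ∧ (1/2) * Real.logb 2
        (1 + (g1 + g2 + 2 * g1^2 * Ps / σ2) / (g1 + g2 + 2 * g1 * g2 * Ps / σ2)) ≤ 1/2 := by
  have hA : 0 < 1 + g1 * (Ps / σ2) := by positivity
  have hB : 0 < 1/2 + Ps / σ2 * (g1 * g2 / (g1 + g2)) := by positivity
  have hden : 0 < g1 + g2 + 2 * g1 * g2 * Ps / σ2 := by positivity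
  have hX : 0 < (g1 + g2 + 2 * g1^2 * Ps / σ2) / (g1 + g2 + 2 * g1 * g2 * Ps / σ2) := by
    positivity
  constructor
  · have hC : g1 * Ps / (g2 * Pd + σ2) = Ps * g1 / (Pd * g2 + σ2) := by ring_nf
    have key : (1 + g1 * (Ps / σ2)) / (1/2 + Ps / σ2 * (g1 * g2 / (g1 + g2)))
        = 1 + (g1 + g2 + 2 * g1^2 * Ps / σ2) / (g1 + g2 + 2 * g1 * g2 * Ps / σ2) := by
      field_simp
      ring
    have hdiv := Real.logb_div (b := 2) (ne_of_gt hA) (ne_of_gt hB)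
    rw [hU, hRs, hC, key] at *
    nlinarith [hdiv]
  · have h2 : 1 + (g1 + g2 + 2 * g1^2 * Ps / σ2) / (g1 + g2 + 2 * g1 * g2 * Ps / σ2)
        ≤ 2 := by
      have : (g1 + g2 + 2 * g1^2 * Ps / σ2) / (g1 + g2 + 2 * g1 * g2 * Ps / σ2) ≤ 1 := by
        rw [div_le_one hden]
        have hq : 2 * g1^2 * Ps / σ2 ≤ 2 * g1 * g2 * Ps / σ2 :=
          (div_le_div_iff_of_pos_right hσ).mpr (by nlinarith [mul_nonneg (mul_nonneg hg1.le (sub_nonneg.mpr hle)) hPs.le])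
        linarith
      linarith
    have hlog : Real.logb 2 (1 + (g1 + g2 + 2 * g1^2 * Ps / σ2) / (g1 + g2 + 2 * g1 * g2 * Ps / σ2)) ≤ Real.logb 2 2 :=
      Real.logb_le_logb_of_le one_lt_two (by linarith) h2
    rw [Real.logb_self_eq_one one_lt_two] at hlog
    linarith
end

section
/- Fix $g_1, g_2 > 0$. Define for $S > 1$ the function $F(S,\rho) = \frac{1}{2}\cdot\frac{\log\left(1 + S\cdot\frac{S g_1 g_2}{S(g_1+g_2) + S^\rho g_2}\right) - \log\left(1 + \frac{g_1}{g_2} S^{1-\rho}\right)}{\log S}$. Then as $S \to \infty$: if $0 \leq \rho < 1$ then $F(S,\rho) \to \rho/2$; if $1 \leq \rho < 2$ then $F(S,\rho) \to 1 - \rho/2$; if $\rho \geq 2$ then $F(S,\rho) \to 0$. -/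
open Real Filter Topology

private lemma my_rpow_tendsto (t : ℝ) (ht : t ≤ 0) :
    Tendsto (fun S : ℝ => S ^ t) atTop (𝓝 (if t = 0 then 1 else 0)) := by
  rcases eq_or_lt_of_le ht with h | h
  · subst h
    simp only [Real.rpow_zero, if_pos rfl]
    exact tendsto_const_nhds
  · rw [if_neg h.ne]
    have := tendsto_rpow_neg_atTop (y := -t) (by linarith)
    simpa using this

private lemma my_log_ratio (α β la lb : ℝ) (hla : 0 < la) (hlb : 0 < lb) (A B : ℝ → ℝ)
    (hA : Tendsto (fun S => A S / S ^ α) atTop (𝓝 la))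
    (hB : Tendsto (fun S => B S / S ^ β) atTop (𝓝 lb)) :
    Tendsto (fun S => (Real.log (A S) - Real.log (B S)) / Real.log S) atTop (𝓝 (α - β)) := by
  have h1 : Tendsto (fun S => Real.log (A S / S ^ α)) atTop (𝓝 (Real.log la)) :=
    hA.log hla.ne'
  have h2 : Tendsto (fun S => Real.log (B S / S ^ β)) atTop (𝓝 (Real.log lb)) :=
    hB.log hlb.ne'
  have hq : Tendsto (fun S => (Real.log (A S / S ^ α) - Real.log (B S / S ^ β)) / Real.log S
      + (α - β)) atTop (𝓝 (α - β)) := by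
    have := ((h1.sub h2).div_atTop Real.tendsto_log_atTop).add
      (tendsto_const_nhds (α := ℝ) (x := α - β))
    simpa using this
  refine hq.congr' ?_
  filter_upwards [hA.eventually (eventually_gt_nhds hla), hB.eventually (eventually_gt_nhds hlb),
    eventually_gt_atTop (1:ℝ)] with S hAp hBp hS1
  have hS0 : (0:ℝ) < S := by linarith
  have hlogS : 0 < Real.log S := Real.log_pos hS1
  have hSα : (0:ℝ) < S ^ α := Real.rpow_pos_of_pos hS0 α
  have hSβ : (0:ℝ) < S ^ β := Real.rpow_pos_of_pos hS0 β
  have hA0 : 0 < A S := by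
    have := mul_pos hAp hSα
    rwa [div_mul_cancel₀ _ hSα.ne'] at this
  have hB0 : 0 < B S := by
    have := mul_pos hBp hSβ
    rwa [div_mul_cancel₀ _ hSβ.ne'] at this
  rw [Real.log_div hA0.ne' hSα.ne', Real.log_div hB0.ne' hSβ.ne',
    Real.log_rpow hS0, Real.log_rpow hS0]
  field_simp
  ring

private lemma my_A_div (g1 g2 : ℝ) (hg1 : 0 < g1) (hg2 : 0 < g2) (ρ α γ S : ℝ) (hS : 1 < S) :
    (1 + S * (S * g1 * g2 / (S * (g1 + g2) + S ^ ρ * g2))) / S ^ α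
      = S ^ (-α) + S ^ (2 - α - γ) * g1 * g2 / (S ^ (1 - γ) * (g1 + g2) + S ^ (ρ - γ) * g2) := by
  have hS0 : (0:ℝ) < S := by linarith
  have hγ : (0:ℝ) < S ^ γ := Real.rpow_pos_of_pos hS0 γ
  have hD : (0:ℝ) < S * (g1 + g2) + S ^ ρ * g2 := by positivity
  have hα : (0:ℝ) < S ^ α := Real.rpow_pos_of_pos hS0 α
  have e1 : S ^ (2 - α - γ) * S ^ γ = S * S / S ^ α := by
    rw [← Real.rpow_add hS0, show (2 - α - γ + γ) = 2 - α by ring, Real.rpow_sub hS0,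
      show (2:ℝ) = ((2:ℕ):ℝ) by norm_num, Real.rpow_natCast]
    ring
  have e2 : S ^ (1 - γ) * S ^ γ = S := by
    rw [← Real.rpow_add hS0, show (1 - γ + γ) = 1 by ring, Real.rpow_one]
  have e3 : S ^ (ρ - γ) * S ^ γ = S ^ ρ := by
    rw [← Real.rpow_add hS0, show (ρ - γ + γ) = ρ by ring]
  have e4 : S ^ (-α) * S ^ α = 1 := by
    rw [← Real.rpow_add hS0, show (-α + α) = 0 by ring, Real.rpow_zero]
  have key : S ^ (2 - α - γ) * g1 * g2 / (S ^ (1 - γ) * (g1 + g2) + S ^ (ρ - γ) * g2)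
      = (S * S / S ^ α) * g1 * g2 / (S * (g1 + g2) + S ^ ρ * g2) := by
    rw [div_eq_div_iff (by positivity) (by positivity)]
    calc S ^ (2 - α - γ) * g1 * g2 * (S * (g1 + g2) + S ^ ρ * g2)
        = S ^ (2 - α - γ) * S ^ γ * g1 * g2 * ((S ^ (1-γ) * S ^ γ) * (g1 + g2) * (S^γ)⁻¹
            + (S ^ (ρ-γ) * S ^ γ) * g2 * (S^γ)⁻¹) := by
          rw [e2, e3]; field_simp
      _ = S * S / S ^ α * g1 * g2 * (S ^ (1 - γ) * (g1 + g2) + S ^ (ρ - γ) * g2) := by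
          rw [e1]; field_simp
  rw [key]
  rw [div_eq_iff hα.ne']
  have : S ^ (-α) = (S ^ α)⁻¹ := by
    rw [Real.rpow_neg hS0.le]
  rw [this]
  field_simp

private lemma my_B_div (g1 g2 : ℝ) (ρ β S : ℝ) (hS : 1 < S) :
    (1 + g1 / g2 * S ^ (1 - ρ)) / S ^ β = S ^ (-β) + g1 / g2 * S ^ (1 - ρ - β) := by
  have hS0 : (0:ℝ) < S := by linarith
  have hβ : (0:ℝ) < S ^ β := Real.rpow_pos_of_pos hS0 β
  rw [Real.rpow_neg hS0.le, show (1 - ρ - β) = (1 - ρ) + -β by ring, Real.rpow_add hS0,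
    Real.rpow_neg hS0.le, div_eq_mul_inv]
  ring

private lemma my_limA (g1 g2 : ℝ) (e1 e2 e3 e4 : ℝ) (h1 : e1 ≤ 0) (h2 : e2 ≤ 0)
    (h3 : e3 ≤ 0) (h4 : e4 ≤ 0)
    (hden : (0:ℝ) < (if e3 = 0 then 1 else 0) * (g1 + g2) + (if e4 = 0 then 1 else 0) * g2) :
    Tendsto (fun S : ℝ => S ^ e1 + S ^ e2 * g1 * g2 / (S ^ e3 * (g1 + g2) + S ^ e4 * g2)) atTop
      (𝓝 ((if e1 = 0 then 1 else 0) + (if e2 = 0 then 1 else 0) * g1 * g2 /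
        ((if e3 = 0 then 1 else 0) * (g1 + g2) + (if e4 = 0 then 1 else 0) * g2))) := by
  exact (my_rpow_tendsto e1 h1).add
    (Tendsto.div (((my_rpow_tendsto e2 h2).mul_const g1).mul_const g2)
      (((my_rpow_tendsto e3 h3).mul_const (g1 + g2)).add ((my_rpow_tendsto e4 h4).mul_const g2))
      hden.ne')

private lemma my_limB (g1 g2 : ℝ) (f1 f2 : ℝ) (h1 : f1 ≤ 0) (h2 : f2 ≤ 0) :
    Tendsto (fun S : ℝ => S ^ f1 + g1 / g2 * S ^ f2) atTop
      (𝓝 ((if f1 = 0 then 1 else 0) + g1 / g2 * (if f2 = 0 then 1 else 0))) :=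
  (my_rpow_tendsto f1 h1).add ((my_rpow_tendsto f2 h2).const_mul (g1 / g2))

theorem gsdof_af_limit (g1 g2 : ℝ) (hg1 : 0 < g1) (hg2 : 0 < g2) (ρ : ℝ) (hρ : 0 ≤ ρ)
    (F : ℝ → ℝ → ℝ)
    (hF : ∀ S ρ', F S ρ' =
      (1/2) * ((Real.logb 2 (1 + S * (S * g1 * g2 / (S * (g1 + g2) + S ^ ρ' * g2)))
        - Real.logb 2 (1 + g1 / g2 * S ^ (1 - ρ'))) / Real.logb 2 S)) :
    (ρ < 1 → Tendsto (fun S => F S ρ) atTop (𝓝 (ρ / 2)))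
    ∧ (1 ≤ ρ → ρ < 2 → Tendsto (fun S => F S ρ) atTop (𝓝 (1 - ρ / 2)))
    ∧ (2 ≤ ρ → Tendsto (fun S => F S ρ) atTop (𝓝 0)) := by
  have hlog2 : Real.log 2 ≠ 0 := (Real.log_pos one_lt_two).ne'
  set A : ℝ → ℝ := fun S => 1 + S * (S * g1 * g2 / (S * (g1 + g2) + S ^ ρ * g2)) with hAdef
  set B : ℝ → ℝ := fun S => 1 + g1 / g2 * S ^ (1 - ρ) with hBdef
  have hFeq : ∀ S, F S ρ = (1/2) * ((Real.log (A S) - Real.log (B S)) / Real.log S) := by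
    intro S
    rw [hF]
    simp only [Real.logb, hAdef, hBdef]
    rw [div_sub_div_same, div_div_div_cancel_right₀ hlog2]
  have main : ∀ α β la lb : ℝ, 0 < la → 0 < lb →
      Tendsto (fun S => A S / S ^ α) atTop (𝓝 la) →
      Tendsto (fun S => B S / S ^ β) atTop (𝓝 lb) →
      Tendsto (fun S => F S ρ) atTop (𝓝 ((1/2) * (α - β))) := by
    intro α β la lb hla hlb hA hB
    have h := (my_log_ratio α β la lb hla hlb A B hA hB).const_mul (1/2 : ℝ)
    exact h.congr fun S => (hFeq S).symm
  refine ⟨fun hρ1 => ?_, fun hρ1 hρ2 => ?_, fun hρ2 => ?_⟩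
  · -- 0 ≤ ρ < 1 : α = 1, β = 1 - ρ
    have eA1 : (if (-1:ℝ) = 0 then (1:ℝ) else 0) = 0 := if_neg (by norm_num)
    have eA2 : (if (2-1-1:ℝ) = 0 then (1:ℝ) else 0) = 1 := if_pos (by norm_num)
    have eA3 : (if (1-1:ℝ) = 0 then (1:ℝ) else 0) = 1 := if_pos (by norm_num)
    have eA4 : (if ρ - 1 = 0 then (1:ℝ) else 0) = 0 := if_neg (by intro h; linarith)
    have eB1 : (if -(1-ρ) = 0 then (1:ℝ) else 0) = 0 := if_neg (by intro h; linarith)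
    have eB2 : (if 1-ρ-(1-ρ) = 0 then (1:ℝ) else 0) = 1 := if_pos (by ring)
    have hden : (0:ℝ) < (if (1-1:ℝ) = 0 then (1:ℝ) else 0) * (g1 + g2)
        + (if ρ - 1 = 0 then (1:ℝ) else 0) * g2 := by
      rw [eA3, eA4]; nlinarith
    have hA : Tendsto (fun S => A S / S ^ (1:ℝ)) atTop
        (𝓝 ((if (-1:ℝ) = 0 then 1 else 0) + (if (2-1-1:ℝ) = 0 then 1 else 0) * g1 * g2 /
          ((if (1-1:ℝ) = 0 then 1 else 0) * (g1 + g2) + (if ρ - 1 = 0 then 1 else 0) * g2))) := by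
      refine Tendsto.congr' ?_ (my_limA g1 g2 (-1) (2-1-1) (1-1) (ρ-1) (by norm_num)
        (by norm_num) (by norm_num) (by linarith) hden)
      filter_upwards [eventually_gt_atTop (1:ℝ)] with S hS
      exact (my_A_div g1 g2 hg1 hg2 ρ 1 1 S hS).symm
    have hB : Tendsto (fun S => B S / S ^ (1-ρ)) atTop
        (𝓝 ((if -(1-ρ) = 0 then 1 else 0) + g1 / g2 * (if 1-ρ-(1-ρ) = 0 then 1 else 0))) := by
      refine Tendsto.congr' ?_ (my_limB g1 g2 (-(1-ρ)) (1-ρ-(1-ρ)) (by linarith) (by norm_num))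
      filter_upwards [eventually_gt_atTop (1:ℝ)] with S hS
      exact (my_B_div g1 g2 ρ (1-ρ) S hS).symm
    rw [eA1, eA2, eA3, eA4] at hA
    rw [eB1, eB2] at hB
    rw [eA3, eA4] at hden
    have hla : (0:ℝ) < 0 + 1 * g1 * g2 / (1 * (g1 + g2) + 0 * g2) := by
      have h1 : (0:ℝ) < 1 * g1 * g2 := by nlinarith
      have := div_pos h1 hden
      linarith
    have hlb : (0:ℝ) < 0 + g1 / g2 * 1 := by
      have := div_pos hg1 hg2
      linarith
    have := main 1 (1-ρ) _ _ hla hlb hA hB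
    convert this using 2
    ring
  · -- 1 ≤ ρ < 2 : α = 2 - ρ, β = 0
    have eA1 : (if -(2-ρ) = 0 then (1:ℝ) else 0) = 0 := if_neg (by intro h; linarith)
    have eA2 : (if 2-(2-ρ)-ρ = 0 then (1:ℝ) else 0) = 1 := if_pos (by ring)
    have eA4 : (if ρ - ρ = 0 then (1:ℝ) else 0) = 1 := if_pos (by ring)
    have eB1 : (if -(0:ℝ) = 0 then (1:ℝ) else 0) = 1 := if_pos (by norm_num)
    set c : ℝ := if 1 - ρ = 0 then (1:ℝ) else 0 with hc_def
    have hc : (0:ℝ) ≤ c := by rw [hc_def]; split <;> norm_num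
    have hden : (0:ℝ) < (if 1-ρ = 0 then (1:ℝ) else 0) * (g1 + g2)
        + (if ρ - ρ = 0 then (1:ℝ) else 0) * g2 := by
      rw [eA4, ← hc_def]
      nlinarith [mul_nonneg hc (by linarith : (0:ℝ) ≤ g1 + g2)]
    have hA : Tendsto (fun S => A S / S ^ (2-ρ)) atTop
        (𝓝 ((if -(2-ρ) = 0 then 1 else 0) + (if 2-(2-ρ)-ρ = 0 then 1 else 0) * g1 * g2 /
          ((if 1-ρ = 0 then 1 else 0) * (g1 + g2) + (if ρ-ρ = 0 then 1 else 0) * g2))) := by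
      refine Tendsto.congr' ?_ (my_limA g1 g2 (-(2-ρ)) (2-(2-ρ)-ρ) (1-ρ) (ρ-ρ) (by linarith)
        (by norm_num) (by linarith) (by norm_num) hden)
      filter_upwards [eventually_gt_atTop (1:ℝ)] with S hS
      exact (my_A_div g1 g2 hg1 hg2 ρ (2-ρ) ρ S hS).symm
    have hB : Tendsto (fun S => B S / S ^ (0:ℝ)) atTop
        (𝓝 ((if -(0:ℝ) = 0 then 1 else 0) + g1 / g2 * (if 1-ρ-0 = 0 then 1 else 0))) := by
      refine Tendsto.congr' ?_ (my_limB g1 g2 (-0) (1-ρ-0) (by norm_num) (by linarith))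
      filter_upwards [eventually_gt_atTop (1:ℝ)] with S hS
      exact (my_B_div g1 g2 ρ 0 S hS).symm
    have eB2 : (if 1-ρ-0 = 0 then (1:ℝ) else 0) = c := by rw [hc_def, sub_zero]
    rw [eA1, eA2, eA4, ← hc_def] at hA
    rw [eB1, eB2] at hB
    rw [eA4, ← hc_def] at hden
    have hla : (0:ℝ) < 0 + 1 * g1 * g2 / (c * (g1 + g2) + 1 * g2) := by
      have h1 : (0:ℝ) < 1 * g1 * g2 := by nlinarith
      have := div_pos h1 hden
      linarith
    have hlb : (0:ℝ) < 1 + g1 / g2 * c := by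
      have h2 : (0:ℝ) ≤ g1 / g2 * c := mul_nonneg (by positivity) hc
      linarith
    have := main (2-ρ) 0 _ _ hla hlb hA hB
    convert this using 2
    ring
  · -- ρ ≥ 2 : α = 0, β = 0
    have eA1 : (if -(0:ℝ) = 0 then (1:ℝ) else 0) = 1 := if_pos (by norm_num)
    have eA3 : (if 1-ρ = 0 then (1:ℝ) else 0) = 0 := if_neg (by intro h; linarith)
    have eA4 : (if ρ - ρ = 0 then (1:ℝ) else 0) = 1 := if_pos (by ring)
    have eB2 : (if 1-ρ-0 = 0 then (1:ℝ) else 0) = 0 := if_neg (by intro h; linarith)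
    set c2 : ℝ := if 2-0-ρ = 0 then (1:ℝ) else 0 with hc2_def
    have hc2 : (0:ℝ) ≤ c2 := by rw [hc2_def]; split <;> norm_num
    have hden : (0:ℝ) < (if 1-ρ = 0 then (1:ℝ) else 0) * (g1 + g2)
        + (if ρ - ρ = 0 then (1:ℝ) else 0) * g2 := by
      rw [eA3, eA4]; nlinarith
    have hA : Tendsto (fun S => A S / S ^ (0:ℝ)) atTop
        (𝓝 ((if -(0:ℝ) = 0 then 1 else 0) + (if 2-0-ρ = 0 then 1 else 0) * g1 * g2 /
          ((if 1-ρ = 0 then 1 else 0) * (g1 + g2) + (if ρ-ρ = 0 then 1 else 0) * g2))) := by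
      refine Tendsto.congr' ?_ (my_limA g1 g2 (-0) (2-0-ρ) (1-ρ) (ρ-ρ) (by norm_num)
        (by linarith) (by linarith) (by norm_num) hden)
      filter_upwards [eventually_gt_atTop (1:ℝ)] with S hS
      exact (my_A_div g1 g2 hg1 hg2 ρ 0 ρ S hS).symm
    have hB : Tendsto (fun S => B S / S ^ (0:ℝ)) atTop
        (𝓝 ((if -(0:ℝ) = 0 then 1 else 0) + g1 / g2 * (if 1-ρ-0 = 0 then 1 else 0))) := by
      refine Tendsto.congr' ?_ (my_limB g1 g2 (-0) (1-ρ-0) (by norm_num) (by linarith))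
      filter_upwards [eventually_gt_atTop (1:ℝ)] with S hS
      exact (my_B_div g1 g2 ρ 0 S hS).symm
    rw [eA1, eA3, eA4, ← hc2_def] at hA
    rw [eA1, eB2] at hB
    rw [eA3, eA4] at hden
    have hla : (0:ℝ) < 1 + c2 * g1 * g2 / (0 * (g1 + g2) + 1 * g2) := by
      have h1 : (0:ℝ) ≤ c2 * g1 * g2 := by positivity
      have := div_nonneg h1 hden.le
      linarith
    have hlb : (0:ℝ) < 1 + g1 / g2 * 0 := by norm_num
    have := main 0 0 _ _ hla hlb hA hB
    convert this using 2
    ring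
end

section
/- Let $g_1, g_2$ be independent exponential random variables with means $\varepsilon_1, \varepsilon_2 > 0$, and let $c > 0$. Then $\Pr\left(\frac{g_1 g_2}{g_1 + g_2} < c\right) = 1 - e^{-(1/\varepsilon_1 + 1/\varepsilon_2)c} \cdot \frac{2c}{\sqrt{\varepsilon_1 \varepsilon_2}} K_1\left(\frac{2c}{\sqrt{\varepsilon_1 \varepsilon_2}}\right)$, where $K_1$ is the first-order modified Bessel function of the second kind. -/
open MeasureTheory ProbabilityTheory

/-- The modified Bessel function of the second kind of order one, via the
integral representation `K₁(x) = ∫₀^∞ exp (-x cosh t) cosh t dt` (valid for `x > 0`). -/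
noncomputable def besselK1 (x : ℝ) : ℝ :=
  ∫ t in Set.Ioi (0 : ℝ), Real.exp (-x * Real.cosh t) * Real.cosh t

/-!
Conditioning on `g₁ = x` and writing `rᵢ = 1 / εᵢ`: for `0 ≤ x ≤ c` the event
`c ≤ g₁ g₂ / (g₁ + g₂)` is null, while for `x > c` it is `g₂ ≥ c x / (x - c)`, of probability
`exp (-r₂ c x / (x - c))`. Since `c x / (x - c) = c + c² / (x - c)`, the shift `x = c + u` gives
`P = r₁ e^{-(r₁ + r₂) c} ∫₀^∞ exp (-(r₁ u + r₂ c² / u)) du`. In `∫₀^∞ exp (-(p u + q / u)) du` the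
substitution `u = √(q/p) eᵗ` turns the exponent into `-2 √(p q) cosh t`, and since `cosh` is even
the weight `eᵗ` may be replaced by `cosh t`, which yields `2 √(q/p) K₁ (2 √(p q))`.
-/

open Real Set

section ExpSubstitution

variable {E : Type*} [NormedAddCommGroup E] [NormedSpace ℝ E]

theorem integral_exp_smul_comp_exp (g : ℝ → E) :
    ∫ t, exp t • g (exp t) = ∫ v in Ioi 0, g v := by
  simpa [abs_of_pos (exp_pos _), range_exp] using
    (integral_image_eq_integral_abs_deriv_smul MeasurableSet.univ
      (fun t _ ↦ (hasDerivAt_exp t).hasDerivWithinAt) exp_injective.injOn g).symm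

theorem integrable_exp_smul_comp_exp_iff (g : ℝ → E) :
    Integrable (fun t ↦ exp t • g (exp t)) ↔ IntegrableOn g (Ioi 0) := by
  simpa [abs_of_pos (exp_pos _), range_exp] using
    (integrableOn_image_iff_integrableOn_abs_deriv_smul MeasurableSet.univ
      (fun t _ ↦ (hasDerivAt_exp t).hasDerivWithinAt) exp_injective.injOn g).symm

end ExpSubstitution

theorem integrableOn_exp_neg_mul_add_div {p q : ℝ} (hp : 0 < p) (hq : 0 ≤ q) :
    IntegrableOn (fun u ↦ exp (-(p * u + q / u))) (Ioi 0) := by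
  refine (exp_neg_integrableOn_Ioi 0 hp).mono' ?_
    (ae_restrict_of_forall_mem measurableSet_Ioi fun u (hu : 0 < u) ↦ ?_)
  · exact (continuousOn_id.const_smul p |>.add (continuousOn_const.div continuousOn_id
      fun u (hu : 0 < u) ↦ hu.ne')).neg.rexp.aestronglyMeasurable measurableSet_Ioi
  · rw [norm_of_nonneg (exp_pos _).le, neg_mul]
    exact exp_le_exp.2 (by linarith [div_nonneg hq hu.le])

theorem two_mul_mul_cosh (s t : ℝ) : 2 * s * cosh t = s * exp t + s / exp t := by
  rw [cosh_eq, exp_neg]; ring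

theorem integrable_exp_neg_mul_cosh_mul_exp {x : ℝ} (hx : 0 < x) :
    Integrable fun t ↦ exp (-x * cosh t) * exp t := by
  have h := (integrable_exp_smul_comp_exp_iff _).2
    (integrableOn_exp_neg_mul_add_div (half_pos hx) (half_pos hx).le)
  refine h.congr (ae_of_all _ fun t ↦ ?_)
  simp only [smul_eq_mul, ← two_mul_mul_cosh]
  ring_nf

theorem integral_exp_neg_mul_cosh_mul_exp {x : ℝ} (hx : 0 < x) :
    ∫ t, exp (-x * cosh t) * exp t = 2 * besselK1 x := by
  have hint := integrable_exp_neg_mul_cosh_mul_exp hx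
  have hflip : ∫ t, exp (-x * cosh t) * exp (-t) = ∫ t, exp (-x * cosh t) * exp t := by
    simpa only [cosh_neg] using integral_neg_eq_self (fun t ↦ exp (-x * cosh t) * exp t) volume
  have hcosh : ∫ t, exp (-x * cosh t) * cosh t = 2 * besselK1 x := by
    rw [besselK1]
    simpa only [cosh_abs] using integral_comp_abs (f := fun t ↦ exp (-x * cosh t) * cosh t)
  have hsum := integral_add hint (by simpa only [cosh_neg] using hint.comp_neg)
  have hmean : ∀ t, exp (-x * cosh t) * exp t + exp (-x * cosh t) * exp (-t)
      = 2 * (exp (-x * cosh t) * cosh t) := fun t ↦ by rw [cosh_eq]; ring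
  simp only [hmean, integral_const_mul, hcosh, hflip] at hsum
  linarith

theorem integral_exp_neg_mul_add_div {p q : ℝ} (hp : 0 < p) (hq : 0 < q) :
    ∫ u in Ioi 0, exp (-(p * u + q / u)) = 2 * √(q / p) * besselK1 (2 * √(p * q)) := by
  set m := √(q / p)
  set s := √(p * q)
  have hm : 0 < m := sqrt_pos.2 (div_pos hq hp)
  -- `u = m * v` balances the two terms: `p * m = q / m = s`
  have hpm : p * m = s := by
    rw [← sqrt_sq hp.le, ← sqrt_mul (sq_nonneg p)]; congr 1; field_simp
  have hqm : q / m = s := by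
    rw [← sqrt_sq hq.le, ← sqrt_div (sq_nonneg q)]; congr 1; field_simp
  calc ∫ u in Ioi 0, exp (-(p * u + q / u))
      = m * ∫ v in Ioi 0, exp (-(s * v + s / v)) := by
        have hscale := integral_comp_mul_left_Ioi' (fun u ↦ exp (-(p * u + q / u))) 0 hm
        rw [mul_zero] at hscale
        rw [← hscale, smul_eq_mul]
        congr 2 with v
        rw [← div_div, hqm, ← mul_assoc, hpm]
    _ = m * ∫ t, exp (-(2 * s) * cosh t) * exp t := by
        rw [← integral_exp_smul_comp_exp]
        congr 2 with t
        rw [smul_eq_mul, mul_comm, neg_mul, two_mul_mul_cosh]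
    _ = 2 * m * besselK1 (2 * s) := by
        rw [integral_exp_neg_mul_cosh_mul_exp (by positivity)]; ring

theorem expMeasure_Iio_zero (r : ℝ) : expMeasure r (Iio 0) = 0 := by
  rw [show expMeasure r = volume.withDensity (exponentialPDF r) from rfl,
    withDensity_apply _ measurableSet_Iio]
  exact lintegral_exponentialPDF_of_nonpos le_rfl

theorem expMeasure_inter_Ici_zero (r : ℝ) (s : Set ℝ) :
    expMeasure r (s ∩ Ici 0) = expMeasure r s :=
  measure_inter_conull (by rw [compl_Ici]; exact expMeasure_Iio_zero r)

theorem expMeasure_Ici {r t : ℝ} (hr : 0 < r) (ht : 0 ≤ t) :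
    expMeasure r (Ici t) = ENNReal.ofReal (exp (-(r * t))) := by
  have := isProbabilityMeasure_expMeasure hr
  have hatom : expMeasure r {t} = 0 := withDensity_absolutelyContinuous _ _ (measure_singleton t)
  rw [← compl_Iio, prob_compl_eq_one_sub measurableSet_Iio, measure_congr (Iio_ae_eq_Iic' hatom),
    ← ofReal_cdf, cdf_expMeasure_eq hr, if_pos ht, ← ENNReal.ofReal_one,
    ← ENNReal.ofReal_sub _ (sub_nonneg.2 (exp_le_one_iff.2 (by nlinarith))), sub_sub_cancel]

theorem setOf_le_mul_div_add_inter_Ici_zero_of_le {c x : ℝ} (hc : 0 < c) (hx : 0 ≤ x)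
    (hxc : x ≤ c) : {y | c ≤ x * y / (x + y)} ∩ Ici 0 = ∅ := by
  refine eq_empty_of_forall_notMem fun y ⟨(hy : c ≤ x * y / (x + y)), (hy0 : 0 ≤ y)⟩ ↦ ?_
  rcases hx.eq_or_lt with rfl | hx
  · simp only [zero_mul, zero_div] at hy
    linarith
  · rw [le_div_iff₀ (by linarith)] at hy
    nlinarith [mul_le_mul_of_nonneg_right hxc hy0]

theorem setOf_le_mul_div_add_inter_Ici_zero_of_lt {c x : ℝ} (hc : 0 < c) (hxc : c < x) :
    {y | c ≤ x * y / (x + y)} ∩ Ici 0 = Ici (c * x / (x - c)) := by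
  have hxc' : 0 < x - c := sub_pos.2 hxc
  ext y
  simp only [mem_inter_iff, mem_ofPred_eq, mem_Ici, div_le_iff₀ hxc']
  constructor
  · rintro ⟨hy, hy0⟩
    rw [le_div_iff₀ (by linarith)] at hy
    linarith
  · intro hy
    have hy0 : 0 ≤ y := by nlinarith
    exact ⟨by rw [le_div_iff₀ (by linarith)]; linarith, hy0⟩

theorem exponentialPDF_mul_expMeasure_setOf_le_mul_div_add {r₁ r₂ c : ℝ} (hr₂ : 0 < r₂)
    (hc : 0 < c) (x : ℝ) :
    exponentialPDF r₁ x * expMeasure r₂ {y | c ≤ x * y / (x + y)}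
      = (Ioi c).indicator (fun x ↦ ENNReal.ofReal
          (r₁ * exp (-(r₁ + r₂) * c) * exp (-(r₁ * (x - c) + r₂ * c ^ 2 / (x - c))))) x := by
  rcases lt_or_ge c x with hxc | hxc
  · have hxc' : 0 < x - c := sub_pos.2 hxc
    have hx : 0 < x := hc.trans hxc
    rw [indicator_of_mem (mem_Ioi.2 hxc), exponentialPDF_of_nonneg hx.le,
      ← expMeasure_inter_Ici_zero, setOf_le_mul_div_add_inter_Ici_zero_of_lt hc hxc,
      expMeasure_Ici hr₂ (by positivity), ← ENNReal.ofReal_mul' (exp_pos _).le, mul_assoc,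
      ← exp_add, mul_assoc, ← exp_add]
    congr 3
    field_simp
    ring
  rw [indicator_of_notMem (notMem_Ioi.2 hxc)]
  rcases lt_or_ge x 0 with hx | hx
  · rw [exponentialPDF_of_neg hx, zero_mul]
  · rw [← expMeasure_inter_Ici_zero, setOf_le_mul_div_add_inter_Ici_zero_of_le hc hx hxc,
      measure_empty, mul_zero]

theorem expMeasure_prod_setOf_le_mul_div_add {r₁ r₂ c : ℝ} (hr₁ : 0 < r₁) (hr₂ : 0 < r₂)
    (hc : 0 < c) :
    (expMeasure r₁).prod (expMeasure r₂) {p | c ≤ p.1 * p.2 / (p.1 + p.2)}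
      = ENNReal.ofReal (r₁ * exp (-(r₁ + r₂) * c)
          * ∫ u in Ioi 0, exp (-(r₁ * u + r₂ * c ^ 2 / u))) := by
  have := isProbabilityMeasure_expMeasure hr₂
  have hS : MeasurableSet {p : ℝ × ℝ | c ≤ p.1 * p.2 / (p.1 + p.2)} := by measurability
  set f : ℝ → ℝ := fun u ↦ r₁ * exp (-(r₁ + r₂) * c) * exp (-(r₁ * u + r₂ * c ^ 2 / u))
  have hf : IntegrableOn f (Ioi 0) :=
    (integrableOn_exp_neg_mul_add_div hr₁ (by positivity)).const_mul _
  rw [Measure.prod_apply hS, show expMeasure r₁ = volume.withDensity (exponentialPDF r₁) from rfl,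
    lintegral_withDensity_eq_lintegral_mul _
      (by exact (measurable_exponentialPDFReal r₁).ennreal_ofReal)
      (measurable_measure_prodMk_left hS)]
  simp only [Pi.mul_apply, preimage_ofPred_eq,
    exponentialPDF_mul_expMeasure_setOf_le_mul_div_add hr₂ hc,
    lintegral_indicator measurableSet_Ioi]
  rw [← integral_const_mul, ofReal_integral_eq_lintegral_ofReal hf
    (ae_of_all _ fun u ↦ by positivity)]
  have hshift := (measurePreserving_sub_right volume c).setLIntegral_comp_preimage_emb
    (MeasurableEquiv.subRight c).measurableEmbedding (fun u ↦ ENNReal.ofReal (f u)) (Ioi 0)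
  rwa [preimage_sub_const_Ioi, zero_add] at hshift

theorem measureReal_expMeasure_prod_setOf_mul_div_add_lt {r₁ r₂ c : ℝ} (hr₁ : 0 < r₁)
    (hr₂ : 0 < r₂) (hc : 0 < c) :
    ((expMeasure r₁).prod (expMeasure r₂)).real {p | p.1 * p.2 / (p.1 + p.2) < c}
      = 1 - exp (-(r₁ + r₂) * c) * (2 * c * √(r₁ * r₂)) * besselK1 (2 * c * √(r₁ * r₂)) := by
  have := isProbabilityMeasure_expMeasure hr₁
  have := isProbabilityMeasure_expMeasure hr₂
  have hS : MeasurableSet {p : ℝ × ℝ | c ≤ p.1 * p.2 / (p.1 + p.2)} := by measurability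
  have hsqrt : √(r₁ * (r₂ * c ^ 2)) = c * √(r₁ * r₂) := by
    rw [← mul_assoc, sqrt_mul (by positivity), sqrt_sq hc.le, mul_comm]
  have hsqrt' : r₁ * √(r₂ * c ^ 2 / r₁) = c * √(r₁ * r₂) := by
    rw [← hsqrt, sqrt_div (by positivity), sqrt_mul hr₁.le]
    field_simp
    rw [sq_sqrt hr₁.le]
  rw [show {p : ℝ × ℝ | p.1 * p.2 / (p.1 + p.2) < c} = {p | c ≤ p.1 * p.2 / (p.1 + p.2)}ᶜ by
      ext; simp, measureReal_compl hS, probReal_univ, measureReal_def,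
    expMeasure_prod_setOf_le_mul_div_add hr₁ hr₂ hc, ENNReal.toReal_ofReal (by positivity),
    integral_exp_neg_mul_add_div hr₁ (by positivity), hsqrt, ← mul_assoc 2 c]
  linear_combination (-2 * exp (-(r₁ + r₂) * c) * besselK1 (2 * c * √(r₁ * r₂))) * hsqrt'

theorem mf_connection_outage_prob_general
    {Ω : Type*} [MeasurableSpace Ω] (μ : Measure Ω) [IsProbabilityMeasure μ]
    (g1 g2 : Ω → ℝ)
    (ε1 ε2 : ℝ) (hε1 : 0 < ε1) (hε2 : 0 < ε2)
    (hlaw1 : Measure.map g1 μ = expMeasure (1 / ε1))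
    (hlaw2 : Measure.map g2 μ = expMeasure (1 / ε2))
    (hindep : IndepFun g1 g2 μ)
    (c : ℝ) (hc : 0 < c) :
    (μ {ω | g1 ω * g2 ω / (g1 ω + g2 ω) < c}).toReal
      = 1 - Real.exp (-(1 / ε1 + 1 / ε2) * c)
          * (2 * c / Real.sqrt (ε1 * ε2)) * besselK1 (2 * c / Real.sqrt (ε1 * ε2)) := by
  have hr₁ : 0 < 1 / ε1 := by positivity
  have hr₂ : 0 < 1 / ε2 := by positivity
  -- a map that is not a.e.-measurable pushes `μ` forward to `0`
  have hg1 : AEMeasurable g1 μ :=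
    .of_map_ne_zero (hlaw1 ▸ (isProbabilityMeasure_expMeasure hr₁).ne_zero)
  have hg2 : AEMeasurable g2 μ :=
    .of_map_ne_zero (hlaw2 ▸ (isProbabilityMeasure_expMeasure hr₂).ne_zero)
  have hjoint :
      μ.map (fun ω ↦ (g1 ω, g2 ω)) = (expMeasure (1 / ε1)).prod (expMeasure (1 / ε2)) := by
    rw [← hlaw1, ← hlaw2]
    exact (indepFun_iff_map_prod_eq_prod_map_map hg1 hg2).1 hindep
  have hS : MeasurableSet {p : ℝ × ℝ | p.1 * p.2 / (p.1 + p.2) < c} := by measurability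
  have hsqrt : √(1 / ε1 * (1 / ε2)) = 1 / √(ε1 * ε2) := by
    rw [one_div_mul_one_div, sqrt_div' _ (by positivity), sqrt_one]
  rw [← measureReal_def, show {ω | g1 ω * g2 ω / (g1 ω + g2 ω) < c}
      = (fun ω ↦ (g1 ω, g2 ω)) ⁻¹' {p | p.1 * p.2 / (p.1 + p.2) < c} from rfl,
    ← map_measureReal_apply_of_aemeasurable (hg1.prodMk hg2) hS, hjoint,
    measureReal_expMeasure_prod_setOf_mul_div_add_lt hr₁ hr₂ hc, hsqrt, mul_one_div]

theorem mf_connection_outage_prob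
    {Ω : Type*} [MeasurableSpace Ω] (μ : Measure Ω) [IsProbabilityMeasure μ]
    (g1 g2 : Ω → ℝ) (hg1 : Measurable g1) (hg2 : Measurable g2)
    (ε1 ε2 : ℝ) (hε1 : 0 < ε1) (hε2 : 0 < ε2)
    (hlaw1 : Measure.map g1 μ = expMeasure (1 / ε1))
    (hlaw2 : Measure.map g2 μ = expMeasure (1 / ε2))
    (hindep : IndepFun g1 g2 μ)
    (c : ℝ) (hc : 0 < c) :
    (μ {ω | g1 ω * g2 ω / (g1 ω + g2 ω) < c}).toReal
      = 1 - Real.exp (-(1 / ε1 + 1 / ε2) * c)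
          * (2 * c / Real.sqrt (ε1 * ε2)) * besselK1 (2 * c / Real.sqrt (ε1 * ε2)) :=
  mf_connection_outage_prob_general μ g1 g2 ε1 ε2 hε1 hε2 hlaw1 hlaw2 hindep c hc
end

section
/- Fix $\varepsilon_1, \varepsilon_2, \gamma_s > 0$. Define $G(S,\rho) = \frac{-\log\left(\frac{S \varepsilon_1}{S \varepsilon_1 + S^\rho \varepsilon_2 \gamma_s}\right)}{\log S}$ for $S > 1$. Then as $S \to \infty$: $G(S,\rho) \to 0$ if $\rho \leq 1$, $G(S,\rho) \to \rho - 1$ if $1 < \rho \leq 2$, and $\min\{1, \lim_{S\to\infty} G(S,\rho)\} = 1$ if $\rho > 2$. -/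
/-!
Dividing numerator and denominator by `log 2` and expanding the fraction gives
`G S ρ = log (1 + S ^ (ρ - 1) * c) / log S` with `c = ε2 γs / ε1`. For `ρ ≤ 1` the numerator
stays between `0` and `log (1 + c)`, so the quotient vanishes. For `ρ > 1` the numerator is
`(ρ - 1) log S + log (S ^ (1 - ρ) + c)`, whose second term tends to `log c`, so the quotient
tends to `ρ - 1`.
-/

open Real Filter Topology

namespace Real

lemma logb_div_logb {b : ℝ} (hb : log b ≠ 0) (x y : ℝ) :
    logb b x / logb b y = log x / log y :=
  div_div_div_cancel_right₀ hb _ _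

lemma neg_log_div_add_rpow_mul {S a b : ℝ} (hS : 0 < S) (ha : 0 < a) (hb : 0 ≤ b) (ρ : ℝ) :
    -log (S * a / (S * a + S ^ ρ * b)) = log (1 + S ^ (ρ - 1) * (b / a)) := by
  rw [← log_inv, inv_div, rpow_sub_one hS.ne']
  congr 1
  field_simp

lemma tendsto_log_one_add_rpow_mul_div_log_of_nonpos {a c : ℝ} (ha : a ≤ 0) (hc : 0 ≤ c) :
    Tendsto (fun S => log (1 + S ^ a * c) / log S) atTop (𝓝 0) := by
  refine tendsto_bdd_div_atTop_nhds_zero (b := 0) (B := log (1 + c)) ?_ ?_ tendsto_log_atTop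
  · filter_upwards [eventually_gt_atTop 0] with S hS
    exact log_nonneg (le_add_of_nonneg_right (by positivity))
  · filter_upwards [eventually_ge_atTop 1] with S hS
    have hSa : S ^ a ≤ 1 := rpow_le_one_of_one_le_of_nonpos hS ha
    exact log_le_log (by positivity) (by gcongr; exact mul_le_of_le_one_left hc hSa)

lemma tendsto_log_one_add_rpow_mul_div_log_of_pos {a c : ℝ} (ha : 0 < a) (hc : 0 < c) :
    Tendsto (fun S => log (1 + S ^ a * c) / log S) atTop (𝓝 a) := by
  have hremainder : Tendsto (fun S => log (S ^ (-a) + c)) atTop (𝓝 (log c)) := by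
    have hshifted := (tendsto_rpow_neg_atTop ha).add_const c
    rw [zero_add] at hshifted
    exact (continuousAt_log hc.ne').tendsto.comp hshifted
  have hsum := (tendsto_const_nhds (x := a)).add (hremainder.div_atTop tendsto_log_atTop)
  rw [add_zero] at hsum
  refine hsum.congr' ?_
  filter_upwards [eventually_gt_atTop 1] with S hS
  have hS0 : 0 < S := one_pos.trans hS
  have hfactor : 1 + S ^ a * c = S ^ a * (S ^ (-a) + c) := by
    rw [mul_add, ← rpow_add hS0, add_neg_cancel, rpow_zero]
  rw [hfactor, log_mul (by positivity) (by positivity), log_rpow hS0]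
  field_simp [(log_pos hS).ne']

end Real

theorem mf_secrecy_outage_diversity
    (ε1 ε2 γs : ℝ) (hε1 : 0 < ε1) (hε2 : 0 < ε2) (hγs : 0 < γs) (ρ : ℝ)
    (G : ℝ → ℝ → ℝ)
    (hG : ∀ S ρ', G S ρ' =
      -Real.logb 2 (S * ε1 / (S * ε1 + S ^ ρ' * ε2 * γs)) / Real.logb 2 S) :
    (ρ ≤ 1 → Tendsto (fun S => G S ρ) atTop (𝓝 0))
    ∧ (1 < ρ → ρ ≤ 2 → Tendsto (fun S => G S ρ) atTop (𝓝 (ρ - 1)))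
    ∧ (2 < ρ → Tendsto (fun S => G S ρ) atTop (𝓝 (ρ - 1)) ∧ min 1 (ρ - 1) = 1) := by
  have hc : 0 < ε2 * γs / ε1 := by positivity
  have hG_eq : (fun S => log (1 + S ^ (ρ - 1) * (ε2 * γs / ε1)) / log S)
      =ᶠ[atTop] fun S => G S ρ := by
    filter_upwards [eventually_gt_atTop 0] with S hS
    rw [hG, ← logb_inv, logb_div_logb (log_pos one_lt_two).ne', log_inv, mul_assoc (S ^ ρ),
      neg_log_div_add_rpow_mul hS hε1 (by positivity)]
  have hlim_of_one_lt (h : 1 < ρ) : Tendsto (fun S => G S ρ) atTop (𝓝 (ρ - 1)) :=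
    (tendsto_log_one_add_rpow_mul_div_log_of_pos (sub_pos.2 h) hc).congr' hG_eq
  exact ⟨fun h => (tendsto_log_one_add_rpow_mul_div_log_of_nonpos (sub_nonpos.2 h) hc.le).congr'
      hG_eq, fun h _ => hlim_of_one_lt h,
    fun h => ⟨hlim_of_one_lt (by linarith), min_eq_left (by linarith)⟩⟩
end

section
/- For all positive reals $P_s, \sigma^2, g_1, g_2$ with $g_1 \leq g_2$: if $\frac{1}{2}\log\left(\frac{1}{2} + \frac{P_s}{\sigma^2}\cdot\frac{g_1 g_2}{g_1+g_2}\right) - \frac{1}{2}\log\left(1 + \frac{P_s g_1}{P_d g_2 + \sigma^2}\right) < 0$ for some $P_d > 0$, then the upper bound $U = \frac{1}{2}\log\left(1 + \frac{g_1 P_s}{\sigma^2}\right) - \frac{1}{2}\log\left(1 + \frac{g_1 P_s}{g_2 P_d + \sigma^2}\right)$ satisfies $U < \frac{1}{2}$. -/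
open Real

theorem upper_bound_small_when_rate_negative
    (Ps Pd σ2 g1 g2 : ℝ) (hPs : 0 < Ps) (hPd : 0 < Pd) (hσ : 0 < σ2)
    (hg1 : 0 < g1) (hg2 : 0 < g2) (hle : g1 ≤ g2)
    (hneg : (1/2) * Real.logb 2 (1/2 + Ps / σ2 * (g1 * g2 / (g1 + g2)))
        - (1/2) * Real.logb 2 (1 + Ps * g1 / (Pd * g2 + σ2)) < 0) :
    (1/2) * Real.logb 2 (1 + g1 * Ps / σ2)
      - (1/2) * Real.logb 2 (1 + g1 * Ps / (g2 * Pd + σ2)) < 1/2 := by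
  have hsum : 0 < g1 + g2 := by linarith
  have hden : 0 < Pd * g2 + σ2 := by positivity
  have hx : (0:ℝ) < 1/2 + Ps / σ2 * (g1 * g2 / (g1 + g2)) := by positivity
  -- from hneg, arguments compare
  have h1 : 1/2 + Ps / σ2 * (g1 * g2 / (g1 + g2)) < 1 + Ps * g1 / (Pd * g2 + σ2) := by
    by_contra h
    push_neg at h
    have := Real.logb_le_logb_of_le (b := 2) one_lt_two (by positivity) h
    linarith
  -- g1/2 ≤ g1*g2/(g1+g2)
  have h2 : g1 / 2 ≤ g1 * g2 / (g1 + g2) := by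
    rw [div_le_div_iff₀ (by norm_num) hsum]
    nlinarith
  have h3 : Ps / σ2 * (g1 / 2) ≤ Ps / σ2 * (g1 * g2 / (g1 + g2)) := by
    apply mul_le_mul_of_nonneg_left h2 (by positivity)
  have key : 1 + g1 * Ps / σ2 < 2 * (1 + g1 * Ps / (g2 * Pd + σ2)) := by
    have e1 : Ps / σ2 * (g1 / 2) = (g1 * Ps / σ2) / 2 := by ring
    have e2 : Ps * g1 / (Pd * g2 + σ2) = g1 * Ps / (g2 * Pd + σ2) := by ring_nf
    rw [e1] at h3
    rw [e2] at h1
    linarith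
  have hA : (0:ℝ) < 1 + g1 * Ps / σ2 := by positivity
  have hB : (0:ℝ) < 1 + g1 * Ps / (g2 * Pd + σ2) := by positivity
  have := Real.logb_lt_logb (b := 2) one_lt_two hA key
  rw [Real.logb_mul (by norm_num) (ne_of_gt hB), Real.logb_self_eq_one one_lt_two] at this
  linarith
end
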